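/- arXiv:2302.08176 — 5 statements merged into one kernel-verified Lean document; each statement's English description precedes it below -/
import Mathlib

section
/- Define f(K) := {E(W) : W ⊆ K} for K ⊆ 𝒫(T), and d(F) := {A ⊆ T : 𝒟_A ∈ F} for F ⊆ E. Then: (i) if K is a coherent SDS, f(K) is a proper principal filter on (E, ⊆), namely f(K) = {E' ∈ E : E(K) ⊆ E'}; (ii) if F is a proper principal filter on (E, ⊆), then d(F) is a coherent SDS; (iii) d(f(K)) = K for every coherent SDS K; (iv) f(d(F)) = F for every proper principal filter F on (E, ⊆); (v) K₁ ⊆ K₂ implies f(K₁) ⊆ f(K₂), and F₁ ⊆ F₂ implies d(F₁) ⊆ d(F₂). Hence f is an order isomorphism between the coherent SDSes ordered by inclusion and the proper principal filters on (E, ⊆) ordered by inclusion, with inverse d. -/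
universe u

variable {T : Type u}

/-- `cl` is a closure operator on subsets of `T`. -/
def IsClosure (cl : Set T → Set T) : Prop :=
  (∀ A : Set T, A ⊆ cl A) ∧
  (∀ A B : Set T, A ⊆ B → cl A ⊆ cl B) ∧
  (∀ A : Set T, cl (cl A) = cl A)

/-- `cl` is finitary: the closure of a set is the union of the closures of its
finite subsets. -/
def IsFinitary (cl : Set T → Set T) : Prop :=
  ∀ A : Set T, cl A = ⋃ F ∈ {F : Set T | F.Finite ∧ F ⊆ A}, cl F

/-- A coherent set of desirable things (SDT): closed and avoiding the forbidden
things `Tneg`. -/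
def CohSDT (cl : Set T → Set T) (Tneg : Set T) (D : Set T) : Prop :=
  cl D = D ∧ D ∩ Tneg = ∅

/-- Selection maps of a collection `W` of sets of things: maps choosing an
element of each member of `W`. -/
def Sel (W : Set (Set T)) : Type u :=
  {σ : Set T → T // ∀ A ∈ W, σ A ∈ A}

/-- A coherent set of desirable sets of things (SDS): axioms K1–K5. -/
def CohSDS (cl : Set T → Set T) (Tneg : Set T) (K : Set (Set T)) : Prop :=
  (∅ : Set T) ∉ K ∧
  (∀ A₁ ∈ K, ∀ A₂ : Set T, A₁ ⊆ A₂ → A₂ ∈ K) ∧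
  (∀ A ∈ K, A \ Tneg ∈ K) ∧
  (∀ t ∈ cl (∅ : Set T), ({t} : Set T) ∈ K) ∧
  (∀ W ⊆ K, W.Nonempty →
    ∀ f : Sel W → T, (∀ σ : Sel W, f σ ∈ cl (σ.1 '' W)) → Set.range f ∈ K)

/-- A finitely coherent SDS: axioms K1–K4 together with K5 restricted to
nonempty finite subcollections. -/
def FinCohSDS (cl : Set T → Set T) (Tneg : Set T) (K : Set (Set T)) : Prop :=
  (∅ : Set T) ∉ K ∧
  (∀ A₁ ∈ K, ∀ A₂ : Set T, A₁ ⊆ A₂ → A₂ ∈ K) ∧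
  (∀ A ∈ K, A \ Tneg ∈ K) ∧
  (∀ t ∈ cl (∅ : Set T), ({t} : Set T) ∈ K) ∧
  (∀ W ⊆ K, W.Finite → W.Nonempty →
    ∀ f : Sel W → T, (∀ σ : Sel W, f σ ∈ cl (σ.1 '' W)) → Set.range f ∈ K)

/-- A finitely coherent set of desirable finite sets of things (SDFS):
axioms F1–F5. -/
def FinCohSDFS (cl : Set T → Set T) (Tneg : Set T) (K : Set (Set T)) : Prop :=
  (∀ F ∈ K, F.Finite) ∧
  (∅ : Set T) ∉ K ∧
  (∀ F₁ ∈ K, ∀ F₂ : Set T, F₂.Finite → F₁ ⊆ F₂ → F₂ ∈ K) ∧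
  (∀ F ∈ K, F \ Tneg ∈ K) ∧
  (∀ t ∈ cl (∅ : Set T), ({t} : Set T) ∈ K) ∧
  (∀ W ⊆ K, W.Finite → W.Nonempty →
    ∀ f : Sel W → T, (∀ σ : Sel W, f σ ∈ cl (σ.1 '' W)) → Set.range f ∈ K)

/-- The set of things whose singletons belong to `K`. -/
def sdt (K : Set (Set T)) : Set T := {t | ({t} : Set T) ∈ K}

/-- The SDS of all sets of things meeting `D`. -/
def sds (D : Set T) : Set (Set T) := {A | (A ∩ D).Nonempty}

/-- The SDFS of all finite sets of things meeting `D`. -/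
def sdfs (D : Set T) : Set (Set T) := {F | F.Finite ∧ (F ∩ D).Nonempty}

/-- The event `𝒟_A` of all coherent SDTs meeting `A`. -/
def evA (cl : Set T → Set T) (Tneg : Set T) (A : Set T) : Set (Set T) :=
  {D | CohSDT cl Tneg D ∧ (A ∩ D).Nonempty}

/-- The event `E(W)` of all coherent SDTs meeting every member of `W`
(with `E(∅)` equal to the set of all coherent SDTs). -/
def ev (cl : Set T → Set T) (Tneg : Set T) (W : Set (Set T)) : Set (Set T) :=
  {D | CohSDT cl Tneg D ∧ ∀ A ∈ W, (A ∩ D).Nonempty}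

/-- An SDS is conjunctive if every desirable set contains a desirable
singleton. -/
def Conjunctive (K : Set (Set T)) : Prop :=
  ∀ A ∈ K, ∃ t ∈ A, ({t} : Set T) ∈ K

/-- Completeness of an SDS. -/
def CompleteSDS (K : Set (Set T)) : Prop :=
  ∀ A₁ A₂ : Set T, A₁ ∪ A₂ ∈ K → A₁ ∈ K ∨ A₂ ∈ K

/-- The finitary part `K^f` of an SDS. -/
def finPart (K : Set (Set T)) : Set (Set T) :=
  {A | ∃ B ∈ K, B.Finite ∧ B ⊆ A}

/-- An SDS is finitary if every desirable set has a finite desirable subset. -/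
def FinitarySDS (K : Set (Set T)) : Prop :=
  ∀ A ∈ K, ∃ B, B.Finite ∧ B ⊆ A ∧ B ∈ K

/-- The lattice of events `E`. -/
def Ecal (cl : Set T → Set T) (Tneg : Set T) : Set (Set (Set T)) :=
  {E | ∃ W : Set (Set T), E = ev cl Tneg W}

/-- The lattice of finitary events `E_fin`. -/
def Efin (cl : Set T → Set T) (Tneg : Set T) : Set (Set (Set T)) :=
  {E | ∃ W : Set (Set T), W.Finite ∧ E = ev cl Tneg W}

/-- A filter on a lattice of events `L` ordered by inclusion. -/
def IsFilterOn (L F : Set (Set (Set T))) : Prop :=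
  F ⊆ L ∧ F.Nonempty ∧
  (∀ E₁ ∈ F, ∀ E₂ ∈ L, E₁ ⊆ E₂ → E₂ ∈ F) ∧
  (∀ E₁ ∈ F, ∀ E₂ ∈ F, E₁ ∩ E₂ ∈ F)

/-- A proper filter on `L`. -/
def IsProperFilterOn (L F : Set (Set (Set T))) : Prop :=
  IsFilterOn L F ∧ F ≠ L

/-- A prime filter on `L`. -/
def IsPrimeFilterOn (L F : Set (Set (Set T))) : Prop :=
  IsProperFilterOn L F ∧
  ∀ E₁ ∈ L, ∀ E₂ ∈ L, E₁ ∪ E₂ ∈ F → E₁ ∈ F ∨ E₂ ∈ F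

/-- A proper principal filter on `L`: the upset of some nonempty `E₀ ∈ L`. -/
def IsProperPrincipalFilterOn (L F : Set (Set (Set T))) : Prop :=
  ∃ E₀ ∈ L, E₀ ≠ (∅ : Set (Set T)) ∧ F = {E' | E' ∈ L ∧ E₀ ⊆ E'}

/-- The map `f̂` sending an SDS to the collection of events of its finite
subcollections. -/
def fhat (cl : Set T → Set T) (Tneg : Set T) (K : Set (Set T)) :
    Set (Set (Set T)) :=
  {E | ∃ W : Set (Set T), W ⊆ K ∧ W.Finite ∧ E = ev cl Tneg W}

/-- The map `f` sending an SDS to the collection of events of all of its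
subcollections. -/
def fprin (cl : Set T → Set T) (Tneg : Set T) (K : Set (Set T)) :
    Set (Set (Set T)) :=
  {E | ∃ W : Set (Set T), W ⊆ K ∧ E = ev cl Tneg W}

/-- The map `d` sending a collection of events to the SDS it determines. -/
def dmap (cl : Set T → Set T) (Tneg : Set T) (F : Set (Set (Set T))) :
    Set (Set T) :=
  {A : Set T | evA cl Tneg A ∈ F}

/-- `K` is finitely consistent: it is included in some finitely coherent SDS. -/
def FinConsistent (cl : Set T → Set T) (Tneg : Set T) (K : Set (Set T)) : Prop :=
  ∃ K' : Set (Set T), FinCohSDS cl Tneg K' ∧ K ⊆ K'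

/-- `K` is consistent: it is included in some coherent SDS. -/
def Consistent (cl : Set T → Set T) (Tneg : Set T) (K : Set (Set T)) : Prop :=
  ∃ K' : Set (Set T), CohSDS cl Tneg K' ∧ K ⊆ K'

/-- The finitary closure operator on SDSes (with value `𝒫(T)` when `K` is not
finitely consistent, via the empty-intersection convention). -/
def clFin (cl : Set T → Set T) (Tneg : Set T) (K : Set (Set T)) : Set (Set T) :=
  ⋂₀ {K' : Set (Set T) | FinCohSDS cl Tneg K' ∧ K ⊆ K'}

/-- The closure operator on SDSes (with value `𝒫(T)` when `K` is not
consistent, via the empty-intersection convention). -/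
def clSDS (cl : Set T → Set T) (Tneg : Set T) (K : Set (Set T)) : Set (Set T) :=
  ⋂₀ {K' : Set (Set T) | CohSDS cl Tneg K' ∧ K ⊆ K'}

/-! The maps `W ↦ E(W)` and `𝒟 ↦ sdsOf 𝒟` form an antitone Galois connection between
collections of sets of things and sets of coherent SDTs, so both `f` and `d` factor through
it. The only substantial point is that a coherent SDS `K` is closed for this connection:
if `A ∉ K`, then some selection `σ` of `K` has closure missing `A ∪ T⁻`, for otherwise
picking a point of `cl (σ K) ∩ (A ∪ T⁻)` for every `σ` gives, by K5, a member of `K`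
inside `A ∪ T⁻`, whence `A ∈ K` by K2 and K3. That closure is a coherent SDT meeting
every member of `K` but not `A`. -/

def sdsOf (𝒟 : Set (Set T)) : Set (Set T) := {A | ∀ D ∈ 𝒟, (A ∩ D).Nonempty}

section

variable {cl : Set T → Set T} {Tneg : Set T}

lemma ev_anti {W W' : Set (Set T)} (h : W ⊆ W') : ev cl Tneg W' ⊆ ev cl Tneg W :=
  fun _ hD => ⟨hD.1, fun A hA => hD.2 A (h hA)⟩

lemma ev_singleton (A : Set T) : ev cl Tneg {A} = evA cl Tneg A := by
  ext D
  simp [ev, evA]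

lemma subset_sdsOf_iff_subset_ev {W 𝒟 : Set (Set T)} (h𝒟 : ∀ D ∈ 𝒟, CohSDT cl Tneg D) :
    W ⊆ sdsOf 𝒟 ↔ 𝒟 ⊆ ev cl Tneg W :=
  ⟨fun h D hD => ⟨h𝒟 D hD, fun _ hA => h hA D hD⟩, fun h A hA _ hD => (h hD).2 A hA⟩

lemma subset_sdsOf_ev (W : Set (Set T)) : W ⊆ sdsOf (ev cl Tneg W) :=
  (subset_sdsOf_iff_subset_ev fun _ hD => hD.1).2 subset_rfl

lemma ev_sdsOf_ev (W : Set (Set T)) : ev cl Tneg (sdsOf (ev cl Tneg W)) = ev cl Tneg W :=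
  (ev_anti (subset_sdsOf_ev W)).antisymm
    ((subset_sdsOf_iff_subset_ev fun _ hD => hD.1).1 subset_rfl)

lemma dmap_upset_ev (W : Set (Set T)) :
    dmap cl Tneg {E | E ∈ Ecal cl Tneg ∧ ev cl Tneg W ⊆ E} = sdsOf (ev cl Tneg W) := by
  ext A
  have hsub := subset_sdsOf_iff_subset_ev (W := {A}) (𝒟 := ev cl Tneg W) fun _ hD => hD.1
  rw [Set.singleton_subset_iff, ev_singleton] at hsub
  rw [hsub]
  exact and_iff_right ⟨{A}, (ev_singleton A).symm⟩

lemma CohSDT.cl_subset (hcl : IsClosure cl) {D B : Set T} (hD : CohSDT cl Tneg D)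
    (hB : B ⊆ D) : cl B ⊆ D :=
  hD.1 ▸ hcl.2.1 B D hB

lemma exists_sel_image_subset {W : Set (Set T)} {D : Set T} (hW : W.Nonempty)
    (hWD : ∀ A ∈ W, (A ∩ D).Nonempty) : ∃ σ : Sel W, σ.1 '' W ⊆ D := by
  classical
  obtain ⟨A₀, hA₀⟩ := hW
  let σ : Set T → T := fun A =>
    if h : (A ∩ D).Nonempty then h.some else (hWD A₀ hA₀).some
  have hσ : ∀ A ∈ W, σ A ∈ A ∩ D := fun A hA => by
    simpa only [σ, dif_pos (hWD A hA)] using (hWD A hA).some_mem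
  exact ⟨⟨σ, fun A hA => (hσ A hA).1⟩, Set.image_subset_iff.2 fun A hA => (hσ A hA).2⟩

lemma cohSDS_sdsOf (hcl : IsClosure cl) {𝒟 : Set (Set T)} (hne : 𝒟.Nonempty)
    (h𝒟 : ∀ D ∈ 𝒟, CohSDT cl Tneg D) : CohSDS cl Tneg (sdsOf 𝒟) := by
  refine ⟨?_, ?_, ?_, ?_, ?_⟩
  · obtain ⟨D, hD⟩ := hne
    exact fun h => (h D hD).ne_empty (Set.empty_inter D)
  · intro A₁ h₁ A₂ h₁₂ D hD
    exact (h₁ D hD).mono (Set.inter_subset_inter_left D h₁₂)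
  · intro A hA D hD
    obtain ⟨t, htA, htD⟩ := hA D hD
    have htTneg : t ∉ Tneg := fun ht => (h𝒟 D hD).2.subset ⟨htD, ht⟩
    exact ⟨t, ⟨htA, htTneg⟩, htD⟩
  · intro t ht D hD
    exact ⟨t, rfl, (h𝒟 D hD).cl_subset hcl (Set.empty_subset D) ht⟩
  · intro W hWK hW f hf D hD
    obtain ⟨σ, hσD⟩ := exists_sel_image_subset hW fun A hA => hWK hA D hD
    exact ⟨f σ, ⟨σ, rfl⟩, (h𝒟 D hD).cl_subset hcl hσD (hf σ)⟩

namespace CohSDS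

variable {K : Set (Set T)}

lemma mem_of_subset_union (hK : CohSDS cl Tneg K) {A B : Set T} (hB : B ∈ K)
    (hBA : B ⊆ A ∪ Tneg) : A ∈ K :=
  hK.2.1 _ (hK.2.2.1 _ (hK.2.1 B hB _ hBA)) A fun _ ht => ht.1.resolve_right ht.2

lemma exists_sel_disjoint (hK : CohSDS cl Tneg K) (hKne : K.Nonempty) {A : Set T}
    (hA : A ∉ K) : ∃ σ : Sel K, Disjoint (cl (σ.1 '' K)) (A ∪ Tneg) := by
  by_contra! h
  choose f hf using fun σ : Sel K => Set.not_disjoint_iff.1 (h σ)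
  have hrange : Set.range f ∈ K := hK.2.2.2.2 K subset_rfl hKne f fun σ => (hf σ).1
  exact hA (hK.mem_of_subset_union hrange (Set.range_subset_iff.2 fun σ => (hf σ).2))

lemma exists_mem_ev_disjoint (hcl : IsClosure cl) (hK : CohSDS cl Tneg K) {A : Set T}
    (hA : A ∉ K) : ∃ D ∈ ev cl Tneg K, Disjoint A D := by
  rcases K.eq_empty_or_nonempty with rfl | hKne
  · have hcl_empty : cl ∅ = ∅ :=
      Set.eq_empty_of_forall_notMem fun t ht => Set.notMem_empty _ (hK.2.2.2.1 t ht)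
    exact ⟨∅, ⟨⟨hcl_empty, Set.empty_inter Tneg⟩, by simp⟩, Set.disjoint_empty A⟩
  obtain ⟨σ, hσ⟩ := hK.exists_sel_disjoint hKne hA
  refine ⟨cl (σ.1 '' K), ⟨⟨hcl.2.2 _, ?_⟩, fun B hB => ?_⟩, ?_⟩
  · exact Set.disjoint_iff_inter_eq_empty.1 (hσ.mono_right Set.subset_union_right)
  · exact ⟨σ.1 B, σ.2 B hB, hcl.1 _ ⟨B, hB, rfl⟩⟩
  · exact (hσ.mono_right Set.subset_union_left).symm

lemma sdsOf_ev (hcl : IsClosure cl) (hK : CohSDS cl Tneg K) : sdsOf (ev cl Tneg K) = K := by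
  refine subset_antisymm (fun A hA => ?_) (subset_sdsOf_ev K)
  by_contra hAK
  obtain ⟨D, hD, hAD⟩ := hK.exists_mem_ev_disjoint hcl hAK
  exact (hA D hD).ne_empty (Set.disjoint_iff_inter_eq_empty.1 hAD)

lemma ev_ne_empty (hcl : IsClosure cl) (hK : CohSDS cl Tneg K) : ev cl Tneg K ≠ ∅ := by
  intro h
  apply hK.1
  rw [← hK.sdsOf_ev hcl, h]
  exact fun _ hD => hD.elim

lemma fprin_eq (hcl : IsClosure cl) (hK : CohSDS cl Tneg K) :
    fprin cl Tneg K = {E | E ∈ Ecal cl Tneg ∧ ev cl Tneg K ⊆ E} := by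
  ext E
  constructor
  · rintro ⟨W, hWK, rfl⟩
    exact ⟨⟨W, rfl⟩, ev_anti hWK⟩
  · rintro ⟨⟨W, rfl⟩, hKW⟩
    refine ⟨W, ?_, rfl⟩
    rw [← hK.sdsOf_ev hcl]
    exact (subset_sdsOf_iff_subset_ev fun _ hD => hD.1).2 hKW

end CohSDS

end

theorem cohSDS_principal_filter_isomorphism_general (T : Type u)
    (cl : Set T → Set T) (Tneg : Set T)
    (hcl : IsClosure cl) :
    (∀ K : Set (Set T), CohSDS cl Tneg K →
      IsProperPrincipalFilterOn (Ecal cl Tneg) (fprin cl Tneg K) ∧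
      fprin cl Tneg K = {E | E ∈ Ecal cl Tneg ∧ ev cl Tneg K ⊆ E}) ∧
    (∀ F : Set (Set (Set T)), IsProperPrincipalFilterOn (Ecal cl Tneg) F →
      CohSDS cl Tneg (dmap cl Tneg F)) ∧
    (∀ K : Set (Set T), CohSDS cl Tneg K →
      dmap cl Tneg (fprin cl Tneg K) = K) ∧
    (∀ F : Set (Set (Set T)), IsProperPrincipalFilterOn (Ecal cl Tneg) F →
      fprin cl Tneg (dmap cl Tneg F) = F) ∧
    (∀ K₁ K₂ : Set (Set T), K₁ ⊆ K₂ → fprin cl Tneg K₁ ⊆ fprin cl Tneg K₂) ∧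
    (∀ F₁ F₂ : Set (Set (Set T)), F₁ ⊆ F₂ →
      dmap cl Tneg F₁ ⊆ dmap cl Tneg F₂) := by
  have dmap_coherent : ∀ F, IsProperPrincipalFilterOn (Ecal cl Tneg) F →
      CohSDS cl Tneg (dmap cl Tneg F) := by
    rintro F ⟨_, ⟨W, rfl⟩, hne, rfl⟩
    rw [dmap_upset_ev]
    exact cohSDS_sdsOf hcl (Set.nonempty_iff_ne_empty.2 hne) fun _ hD => hD.1
  refine ⟨fun K hK => ?_, dmap_coherent, fun K hK => ?_, ?_, ?_, fun _ _ h _ hA => h hA⟩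
  · exact ⟨⟨_, ⟨K, rfl⟩, hK.ev_ne_empty hcl, hK.fprin_eq hcl⟩, hK.fprin_eq hcl⟩
  · rw [hK.fprin_eq hcl, dmap_upset_ev, hK.sdsOf_ev hcl]
  · intro F hF
    have hcoh := dmap_coherent F hF
    obtain ⟨_, ⟨W, rfl⟩, -, rfl⟩ := hF
    rw [hcoh.fprin_eq hcl, dmap_upset_ev, ev_sdsOf_ev]
  · rintro K₁ K₂ h E ⟨W, hW, rfl⟩
    exact ⟨W, hW.trans h, rfl⟩

/-- Order isomorphism between the coherent SDSes and the proper principal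
filters on `(E, ⊆)`. -/
theorem cohSDS_principal_filter_isomorphism (T : Type u) [Nonempty T]
    (cl : Set T → Set T) (Tneg : Set T)
    (hcl : IsClosure cl) (hsan : cl (∅ : Set T) ∩ Tneg = ∅) :
    (∀ K : Set (Set T), CohSDS cl Tneg K →
      IsProperPrincipalFilterOn (Ecal cl Tneg) (fprin cl Tneg K) ∧
      fprin cl Tneg K = {E | E ∈ Ecal cl Tneg ∧ ev cl Tneg K ⊆ E}) ∧
    (∀ F : Set (Set (Set T)), IsProperPrincipalFilterOn (Ecal cl Tneg) F →
      CohSDS cl Tneg (dmap cl Tneg F)) ∧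
    (∀ K : Set (Set T), CohSDS cl Tneg K →
      dmap cl Tneg (fprin cl Tneg K) = K) ∧
    (∀ F : Set (Set (Set T)), IsProperPrincipalFilterOn (Ecal cl Tneg) F →
      fprin cl Tneg (dmap cl Tneg F) = F) ∧
    (∀ K₁ K₂ : Set (Set T), K₁ ⊆ K₂ → fprin cl Tneg K₁ ⊆ fprin cl Tneg K₂) ∧
    (∀ F₁ F₂ : Set (Set (Set T)), F₁ ⊆ F₂ →
      dmap cl Tneg F₁ ⊆ dmap cl Tneg F₂) :=
  cohSDS_principal_filter_isomorphism_general T cl Tneg hcl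
end

section
/- If K is a coherent SDS or a finitely coherent SDS, then its finitary part K^f := {A ⊆ T : there is a finite B ∈ K with B ⊆ A} is a finitely coherent SDS. -/
universe u

variable {T : Type u}

/-- The finitary part of a (finitely) coherent SDS is finitely coherent. -/
theorem finPart_finCoherent (T : Type u) [Nonempty T]
    (cl : Set T → Set T) (Tneg : Set T)
    (hcl : IsClosure cl) (hsan : cl (∅ : Set T) ∩ Tneg = ∅)
    (K : Set (Set T)) (hK : CohSDS cl Tneg K ∨ FinCohSDS cl Tneg K) :
    FinCohSDS cl Tneg (finPart K) := by
  classical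
  obtain ⟨h1, h2, h3, h4, h5⟩ :
      ((∅ : Set T) ∉ K) ∧
      (∀ A₁ ∈ K, ∀ A₂ : Set T, A₁ ⊆ A₂ → A₂ ∈ K) ∧
      (∀ A ∈ K, A \ Tneg ∈ K) ∧
      (∀ t ∈ cl (∅ : Set T), ({t} : Set T) ∈ K) ∧
      (∀ W ⊆ K, W.Finite → W.Nonempty →
        ∀ f : Sel W → T, (∀ σ : Sel W, f σ ∈ cl (σ.1 '' W)) → Set.range f ∈ K) := by
    rcases hK with ⟨h1, h2, h3, h4, h5⟩ | ⟨h1, h2, h3, h4, h5⟩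
    · exact ⟨h1, h2, h3, h4, fun W hW _ hne => h5 W hW hne⟩
    · exact ⟨h1, h2, h3, h4, h5⟩
  refine ⟨?_, ?_, ?_, ?_, ?_⟩
  · rintro ⟨B, hBK, _, hBsub⟩
    have hB : B = ∅ := Set.subset_empty_iff.mp hBsub
    exact h1 (hB ▸ hBK)
  · rintro A₁ ⟨B, hBK, hBfin, hBsub⟩ A₂ h12
    exact ⟨B, hBK, hBfin, hBsub.trans h12⟩
  · rintro A ⟨B, hBK, hBfin, hBsub⟩
    exact ⟨B \ Tneg, h3 B hBK, hBfin.diff, Set.diff_subset_diff_left hBsub⟩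
  · intro t ht
    exact ⟨{t}, h4 t ht, Set.finite_singleton t, subset_rfl⟩
  · intro W hWsub hWfin hWne f hf
    have t0 : T := Classical.arbitrary T
    have hch : ∀ A ∈ W, ∃ B, B ∈ K ∧ B.Finite ∧ B ⊆ A := fun A hA => hWsub hA
    choose! Bf hBK hBfin hBsub using hch
    have hW'sub : Bf '' W ⊆ K := by rintro _ ⟨A, hA, rfl⟩; exact hBK A hA
    have hW'fin : (Bf '' W).Finite := hWfin.image _
    have hW'ne : (Bf '' W).Nonempty := hWne.image _
    have hAex : ∀ A ∈ W, ∃ t, t ∈ A := by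
      intro A hA
      rcases (Bf A).eq_empty_or_nonempty with h | h
      · exact absurd (h ▸ hBK A hA) h1
      · exact h.imp fun t ht => hBsub A hA ht
    choose! pick hpick using hAex
    set Ext : (Set T → T) → Set T → T := fun χ A =>
      if χ A ∈ A ∧ A ∈ W then χ A else (if A ∈ W then pick A else t0) with hExt
    have hExtSel : ∀ χ, ∀ A ∈ W, Ext χ A ∈ A := by
      intro χ A hA
      rw [hExt]
      by_cases h : χ A ∈ A ∧ A ∈ W
      · simp only [if_pos h]; exact h.1
      · simp only [if_neg h, if_pos hA]
        exact hpick A hA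
    have hExtCongr : ∀ χ₁ χ₂ : Set T → T, (∀ A ∈ W, χ₁ A = χ₂ A) → Ext χ₁ = Ext χ₂ := by
      intro χ₁ χ₂ h
      funext A
      by_cases hA : A ∈ W
      · rw [hExt]; simp only [h A hA]
      · rw [hExt]
        simp [hA]
    set lift : Sel (Bf '' W) → Sel W := fun σ' =>
      ⟨Ext (fun A => σ'.1 (Bf A)), fun A hA => hExtSel (fun A => σ'.1 (Bf A)) A hA⟩ with hlift
    have hliftval : ∀ σ' : Sel (Bf '' W), ∀ A ∈ W, (lift σ').1 A = σ'.1 (Bf A) := by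
      intro σ' A hA
      have hmem : σ'.1 (Bf A) ∈ A := hBsub A hA (σ'.2 (Bf A) ⟨A, hA, rfl⟩)
      rw [hlift]
      simp only [hExt]
      rw [if_pos ⟨hmem, hA⟩]
    set g : Sel (Bf '' W) → T := fun σ' => f (lift σ') with hgdef
    have hg : ∀ σ' : Sel (Bf '' W), g σ' ∈ cl (σ'.1 '' (Bf '' W)) := by
      intro σ'
      have hsub : (lift σ').1 '' W ⊆ σ'.1 '' (Bf '' W) := by
        rintro _ ⟨A, hA, rfl⟩
        rw [hliftval σ' A hA]
        exact ⟨Bf A, ⟨A, hA, rfl⟩, rfl⟩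
      exact hcl.2.1 _ _ hsub (hf (lift σ'))
    have hrange : Set.range g ∈ K := h5 (Bf '' W) hW'sub hW'fin hW'ne g hg
    haveI : Finite ↥W := hWfin.to_subtype
    set v : Sel (Bf '' W) → (↥W → T) := fun σ' a => σ'.1 (Bf a.1) with hv
    set Lsel : (↥W → T) → Sel W := fun u =>
      ⟨Ext (fun A => if h : A ∈ W then u ⟨A, h⟩ else t0),
        fun A hA => hExtSel (fun A => if h : A ∈ W then u ⟨A, h⟩ else t0) A hA⟩ with hLsel
    have hfactor : ∀ σ' : Sel (Bf '' W), lift σ' = Lsel (v σ') := by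
      intro σ'
      rw [hlift, hLsel]
      apply Subtype.ext
      apply hExtCongr
      intro A hA
      rw [hv]
      simp [dif_pos hA]
    have hvrange : Set.range v ⊆ Set.pi Set.univ (fun a : ↥W => Bf a.1) := by
      rintro _ ⟨σ', rfl⟩ a _
      exact σ'.2 (Bf a.1) ⟨a.1, a.2, rfl⟩
    have hvfin : (Set.range v).Finite :=
      (Set.Finite.pi (fun a => hBfin a.1 a.2)).subset hvrange
    have hgfin : (Set.range g).Finite := by
      apply ((hvfin.image Lsel).image f).subset
      rintro _ ⟨σ', rfl⟩
      exact ⟨Lsel (v σ'), ⟨v σ', ⟨σ', rfl⟩, rfl⟩, by rw [hgdef]; simp only [hfactor σ']⟩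
    refine ⟨Set.range g, hrange, hgfin, ?_⟩
    rintro _ ⟨σ', rfl⟩
    exact ⟨lift σ', rfl⟩
end

section
/- (a) If K is a complete and coherent SDS, then D := sdt(K) is a coherent SDT, K ∩ Fin(T) = sds(D) ∩ Fin(T), and the finitary part of K equals sds(D) (in particular the finitary part of K is conjunctive). (b) If cl is finitary, the same conclusions hold for every complete and finitely coherent SDS K. -/
universe u

variable {T : Type u}

section Helpers

variable {T : Type u}

lemma sel_image_singletons (F : Set T) (σ : Sel ((fun d => ({d} : Set T)) '' F)) :
    σ.1 '' ((fun d => ({d} : Set T)) '' F) = F := by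
  ext x
  constructor
  · rintro ⟨A, ⟨d, hd, rfl⟩, rfl⟩
    have h := σ.2 _ ⟨d, hd, rfl⟩
    simp only [Set.mem_singleton_iff] at h
    rwa [h]
  · intro hx
    refine ⟨{x}, ⟨x, hx, rfl⟩, ?_⟩
    have h := σ.2 ({x} : Set T) ⟨x, hx, rfl⟩
    simpa using h

lemma sel_nonempty [Nonempty T] (W : Set (Set T)) (h : ∀ A ∈ W, A.Nonempty) :
    Nonempty (Sel W) := by
  classical
  exact ⟨⟨fun A => if hA : A.Nonempty then hA.some else Classical.arbitrary T,
    fun A hA => by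
      show (if hA : A.Nonempty then hA.some else Classical.arbitrary T) ∈ A
      rw [dif_pos (h A hA)]
      exact (h A hA).some_mem⟩⟩

/-- From completeness + K1 + K2, any finite desirable set meets `sdt K`. -/
lemma finite_mem_meets_sdt {K : Set (Set T)} (hK1 : (∅ : Set T) ∉ K)
    (hcomp : CompleteSDS K) {F : Set T} (hF : F.Finite) (hFK : F ∈ K) :
    ∃ t ∈ F, ({t} : Set T) ∈ K := by
  revert hFK
  refine Set.Finite.induction_on (motive := fun F _ => F ∈ K → ∃ t ∈ F, ({t} : Set T) ∈ K) F hF ?_ ?_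
  · intro h; exact absurd h hK1
  · intro a s _ _ ih hins
    have : ({a} : Set T) ∪ s ∈ K := by
      rwa [Set.singleton_union]
    rcases hcomp _ _ this with h | h
    · exact ⟨a, Set.mem_insert a s, h⟩
    · obtain ⟨t, ht, htK⟩ := ih h
      exact ⟨t, Set.mem_insert_of_mem a ht, htK⟩

/-- Everything except `cl (sdt K) = sdt K`, from K1–K3 and completeness. -/
lemma common_part {Tneg : Set T} {K : Set (Set T)} (hK1 : (∅ : Set T) ∉ K)
    (hK2 : ∀ A₁ ∈ K, ∀ A₂ : Set T, A₁ ⊆ A₂ → A₂ ∈ K)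
    (hK3 : ∀ A ∈ K, A \ Tneg ∈ K)
    (hcomp : CompleteSDS K) :
    sdt K ∩ Tneg = ∅ ∧
    K ∩ {F : Set T | F.Finite} = sds (sdt K) ∩ {F : Set T | F.Finite} ∧
    finPart K = sds (sdt K) ∧ Conjunctive (finPart K) := by
  have hmem : ∀ A : Set T, (A ∩ sdt K).Nonempty → A ∈ K := by
    rintro A ⟨t, htA, htD⟩
    exact hK2 _ htD A (Set.singleton_subset_iff.2 htA)
  refine ⟨?_, ?_, ?_, ?_⟩
  · ext t
    simp only [Set.mem_inter_iff, Set.mem_empty_iff_false, iff_false, not_and]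
    intro htD htn
    have h := hK3 _ htD
    have : ({t} : Set T) \ Tneg = ∅ := by
      ext x; simp only [Set.mem_diff, Set.mem_singleton_iff, Set.mem_empty_iff_false, iff_false,
        not_and, not_not]
      rintro rfl; exact htn
    rw [this] at h
    exact absurd h hK1
  · ext F
    simp only [Set.mem_inter_iff, Set.mem_setOf_eq, sds]
    constructor
    · rintro ⟨hFK, hF⟩
      obtain ⟨t, ht, htK⟩ := finite_mem_meets_sdt hK1 hcomp hF hFK
      exact ⟨⟨t, ht, htK⟩, hF⟩
    · rintro ⟨hne, hF⟩
      exact ⟨hmem F hne, hF⟩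
  · ext A
    simp only [finPart, sds, Set.mem_setOf_eq]
    constructor
    · rintro ⟨B, hBK, hBfin, hBA⟩
      obtain ⟨t, ht, htK⟩ := finite_mem_meets_sdt hK1 hcomp hBfin hBK
      exact ⟨t, hBA ht, htK⟩
    · rintro ⟨t, htA, htD⟩
      exact ⟨{t}, htD, Set.finite_singleton t, Set.singleton_subset_iff.2 htA⟩
  · rintro A ⟨B, hBK, hBfin, hBA⟩
    obtain ⟨t, ht, htK⟩ := finite_mem_meets_sdt hK1 hcomp hBfin hBK
    exact ⟨t, hBA ht, ⟨{t}, htK, Set.finite_singleton t, subset_rfl⟩⟩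

/-- The K5 step: if `F ⊆ sdt K` is nonempty and `t ∈ cl F`, then using K5 on
the family of singletons of elements of `F` we get `{t} ∈ K`. -/
lemma singleton_mem_of_K5 [Nonempty T] {cl : Set T → Set T} {K : Set (Set T)}
    {F : Set T} (hF : F ⊆ sdt K) (hFne : F.Nonempty) {t : T} (ht : t ∈ cl F)
    (hK5 : ∀ f : Sel ((fun d => ({d} : Set T)) '' F) → T,
      (∀ σ, f σ ∈ cl (σ.1 '' ((fun d => ({d} : Set T)) '' F))) →
      Set.range f ∈ K) :
    ({t} : Set T) ∈ K := by
  set W := (fun d => ({d} : Set T)) '' F with hW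
  have hne : Nonempty (Sel W) := by
    apply sel_nonempty
    rintro A ⟨d, _, rfl⟩
    exact ⟨d, rfl⟩
  have h := hK5 (fun _ => t) (fun σ => by rw [sel_image_singletons]; exact ht)
  rwa [Set.range_const] at h

end Helpers

/-- For complete and (finitely) coherent SDSes, the finitary part is the
conjunctive model determined by `sdt K`. -/
theorem complete_finitaryPart_conjunctive (T : Type u) [Nonempty T]
    (cl : Set T → Set T) (Tneg : Set T)
    (hcl : IsClosure cl) (hsan : cl (∅ : Set T) ∩ Tneg = ∅) :
    (∀ K : Set (Set T), CohSDS cl Tneg K → CompleteSDS K →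
      CohSDT cl Tneg (sdt K) ∧
      K ∩ {F : Set T | F.Finite} = sds (sdt K) ∩ {F : Set T | F.Finite} ∧
      finPart K = sds (sdt K) ∧ Conjunctive (finPart K)) ∧
    (IsFinitary cl →
      ∀ K : Set (Set T), FinCohSDS cl Tneg K → CompleteSDS K →
        CohSDT cl Tneg (sdt K) ∧
        K ∩ {F : Set T | F.Finite} = sds (sdt K) ∩ {F : Set T | F.Finite} ∧
        finPart K = sds (sdt K) ∧ Conjunctive (finPart K)) := by
  constructor
  · rintro K ⟨hK1, hK2, hK3, hK4, hK5⟩ hcomp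
    obtain ⟨hTneg, h2, h3, h4⟩ := common_part hK1 hK2 hK3 hcomp
    refine ⟨⟨?_, hTneg⟩, h2, h3, h4⟩
    apply Set.Subset.antisymm _ (hcl.1 _)
    intro t ht
    rcases Set.eq_empty_or_nonempty (sdt K) with hD | hD
    · rw [hD] at ht
      exact hK4 t ht
    · refine singleton_mem_of_K5 subset_rfl hD ht ?_
      intro f hf
      refine hK5 _ ?_ ?_ f hf
      · rintro A ⟨d, hd, rfl⟩
        exact hd
      · obtain ⟨d, hd⟩ := hD
        exact ⟨{d}, d, hd, rfl⟩
  · rintro hfin K ⟨hK1, hK2, hK3, hK4, hK5⟩ hcomp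
    obtain ⟨hTneg, h2, h3, h4⟩ := common_part hK1 hK2 hK3 hcomp
    refine ⟨⟨?_, hTneg⟩, h2, h3, h4⟩
    apply Set.Subset.antisymm _ (hcl.1 _)
    intro t ht
    rw [hfin (sdt K)] at ht
    simp only [Set.mem_iUnion, Set.mem_setOf_eq] at ht
    obtain ⟨F, ⟨hFfin, hFD⟩, htF⟩ := ht
    rcases Set.eq_empty_or_nonempty F with rfl | hFne
    · exact hK4 t htF
    · refine singleton_mem_of_K5 hFD hFne htF ?_
      intro f hf
      refine hK5 _ ?_ (hFfin.image _) ?_ f hf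
      · rintro A ⟨d, hd, rfl⟩
        exact hFD hd
      · obtain ⟨d, hd⟩ := hFne
        exact ⟨{d}, d, hd, rfl⟩
end

section
/- Assume cl is finitary. Then: (i) a finitary SDS K ⊆ 𝒫(T) is finitely coherent if and only if it is coherent; (ii) the finitary part K^f of any coherent SDS, and of any finitely coherent SDS, is a coherent SDS. -/
universe u

variable {T : Type u}

section AuxCoherence

open Set

variable [Nonempty T]

/-- Separation lemma: from a finitely coherent SDS and a non-member `A₀`,
produce a coherent SDT avoiding `A₀` but meeting every finite member of `K`. -/
private lemma sep_lemma (cl : Set T → Set T) (Tneg : Set T)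
    (hcl : IsClosure cl) (hsan : cl (∅ : Set T) ∩ Tneg = ∅) (hfin : IsFinitary cl)
    (K : Set (Set T)) (hK : FinCohSDS cl Tneg K)
    (A₀ : Set T) (hA₀ : A₀ ∉ K) :
    ∃ D : Set T, CohSDT cl Tneg D ∧ A₀ ∩ D = ∅ ∧
      ∀ B ∈ K, B.Finite → (B ∩ D).Nonempty := by
  classical
  obtain ⟨t₀⟩ := ‹Nonempty T›
  obtain ⟨k1, k2, k3, k4, k5⟩ := hK
  set S : Set T := A₀ ∪ Tneg with hS
  have hclS : ∀ t ∈ cl (∅ : Set T), t ∉ S := by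
    intro t ht hts
    rcases hts with h | h
    · exact hA₀ (k2 {t} (k4 t ht) A₀ (Set.singleton_subset_iff.mpr h))
    · exact absurd (hsan ▸ Set.mem_inter ht h) (Set.notMem_empty t)
  -- Step 1: every finite subcollection of K admits a selection avoiding S in closure
  have step1 : ∀ V : Finset (Set T), ↑V ⊆ K →
      ∃ σ : Set T → T, (∀ B ∈ (V : Set (Set T)), σ B ∈ B) ∧
        cl (σ '' (V : Set (Set T))) ∩ S = ∅ := by
    intro V hVK
    by_contra hcon
    push_neg at hcon
    rcases V.eq_empty_or_nonempty with rfl | hVne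
    · obtain ⟨t, ht⟩ := hcon (fun _ => t₀) (by simp)
      simp only [Finset.coe_empty, Set.image_empty] at ht
      exact hclS t ht.1 ht.2
    · set W : Set (Set T) := (V : Set (Set T)) with hW
      have hne : ∀ σ : Sel W, (cl (σ.1 '' W) ∩ S).Nonempty := fun σ => hcon σ.1 σ.2
      let g : Sel W → T := fun σ => (hne σ).choose
      have hg : ∀ σ : Sel W, g σ ∈ cl (σ.1 '' W) ∩ S := fun σ => (hne σ).choose_spec
      have hrange : Set.range g ∈ K :=
        k5 W hVK (V.finite_toSet) (by exact_mod_cast hVne.to_set) g (fun σ => (hg σ).1)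
      have h3 : Set.range g \ Tneg ∈ K := k3 _ hrange
      apply hA₀
      apply k2 _ h3 A₀
      rintro x ⟨⟨σ, rfl⟩, hxn⟩
      rcases (hg σ).2 with h | h
      · exact h
      · exact absurd h hxn
  -- Step 2: index finite members of K
  let ι := {B : Set T // B ∈ K ∧ B.Finite}
  have hτex : ∀ V : Finset ι, ∃ σ : Set T → T,
      (∀ A : ι, A ∈ V → σ A.1 ∈ A.1) ∧
      cl (σ '' (Subtype.val '' (V : Set ι))) ∩ S = ∅ := by
    intro V
    obtain ⟨σ, hσ1, hσ2⟩ := step1 (V.image Subtype.val) (by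
      intro B hB
      simp only [Finset.coe_image, Set.mem_image, Finset.mem_coe] at hB
      obtain ⟨A, _, rfl⟩ := hB
      exact A.2.1)
    refine ⟨σ, ?_, ?_⟩
    · intro A hA
      exact hσ1 A.1 (by
        simp only [Finset.coe_image, Set.mem_image, Finset.mem_coe]
        exact ⟨A, hA, rfl⟩)
    · rw [← Finset.coe_image]
      exact hσ2
  choose τ hτ1 hτ2 using hτex
  -- Step 3: ultrafilter refining atTop on Finset ι
  obtain ⟨𝒰, h𝒰⟩ := Ultrafilter.exists_le (Filter.atTop : Filter (Finset ι))
  have key : ∀ A : ι, ∃ a : T, a ∈ A.1 ∧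
      {V : Finset ι | A ∈ V ∧ τ V A.1 = a} ∈ 𝒰 := by
    intro A
    have hmem : {V : Finset ι | A ∈ V} ∈ 𝒰 := by
      have h1 : {V : Finset ι | {A} ≤ V} ∈ (𝒰 : Filter (Finset ι)) :=
        h𝒰 (Filter.mem_atTop ({A} : Finset ι))
      refine Filter.mem_of_superset h1 ?_
      intro V hV
      exact Finset.singleton_subset_iff.mp hV
    have hsub : {V : Finset ι | A ∈ V} ⊆
        ⋃ a ∈ A.1, {V : Finset ι | A ∈ V ∧ τ V A.1 = a} := by
      intro V hV
      exact Set.mem_biUnion (hτ1 V A hV) ⟨hV, rfl⟩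
    have hmem2 : (⋃ a ∈ A.1, {V : Finset ι | A ∈ V ∧ τ V A.1 = a}) ∈ 𝒰 :=
      Filter.mem_of_superset hmem hsub
    rw [Ultrafilter.finite_biUnion_mem_iff A.2.2] at hmem2
    obtain ⟨a, ha, hmem'⟩ := hmem2
    exact ⟨a, ha, hmem'⟩
  choose σι hσι1 hσι2 using key
  -- Step 4: any finite family of finite members can be selected avoiding S
  have step4 : ∀ G : Set ι, G.Finite → cl (σι '' G) ∩ S = ∅ := by
    intro G hG
    set G' : Finset ι := hG.toFinset with hG'
    have hN : ({V : Finset ι | G' ≤ V} ∩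
        ⋂ A ∈ G, {V : Finset ι | A ∈ V ∧ τ V A.1 = σι A}) ∈ (𝒰 : Filter (Finset ι)) := by
      apply Filter.inter_mem
      · exact h𝒰 (Filter.mem_atTop G')
      · exact (Filter.biInter_mem hG).2 (fun A _ => hσι2 A)
    obtain ⟨V, hV⟩ := Filter.nonempty_of_mem hN
    have hVG : ∀ A ∈ G, A ∈ V := by
      intro A hA
      exact hV.1 (by rw [hG'] ; exact hG.mem_toFinset.mpr hA)
    have hVτ : ∀ A ∈ G, τ V A.1 = σι A := by
      intro A hA
      have := hV.2
      rw [Set.mem_iInter₂] at this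
      exact (this A hA).2
    have himg : σι '' G ⊆ τ V '' (Subtype.val '' (V : Set ι)) := by
      rintro _ ⟨A, hA, rfl⟩
      exact ⟨A.1, ⟨A, hVG A hA, rfl⟩, hVτ A hA⟩
    have hsub : cl (σι '' G) ⊆ cl (τ V '' (Subtype.val '' (V : Set ι))) :=
      hcl.2.1 _ _ himg
    rw [Set.eq_empty_iff_forall_notMem]
    rintro x ⟨hx1, hx2⟩
    have : x ∈ cl (τ V '' (Subtype.val '' (V : Set ι))) ∩ S := ⟨hsub hx1, hx2⟩
    rw [hτ2 V] at this
    exact this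
  -- Step 5: the coherent SDT
  have hDS : cl (Set.range σι) ∩ S = ∅ := by
    rw [Set.eq_empty_iff_forall_notMem]
    rintro x ⟨hx1, hx2⟩
    rw [hfin (Set.range σι)] at hx1
    simp only [Set.mem_iUnion, Set.mem_setOf_eq, exists_prop] at hx1
    obtain ⟨F, ⟨hFfin, hFsub⟩, hxF⟩ := hx1
    have hF' : ∃ G ⊆ (Set.univ : Set ι), G.Finite ∧ x ∈ cl (σι '' G) :=
      (Set.exists_subset_image_finite_and (f := σι) (s := Set.univ)
          (p := fun t => x ∈ cl t)).mp
        ⟨F, by rwa [Set.image_univ], hFfin, hxF⟩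
    obtain ⟨G, _, hGfin, hxG⟩ := hF'
    have h4 := step4 G hGfin
    rw [Set.eq_empty_iff_forall_notMem] at h4
    exact h4 x ⟨hxG, hx2⟩
  rw [Set.eq_empty_iff_forall_notMem] at hDS
  refine ⟨cl (Set.range σι), ⟨hcl.2.2 _, ?_⟩, ?_, ?_⟩
  · rw [Set.eq_empty_iff_forall_notMem]
    rintro x ⟨h1, h2⟩
    exact hDS x ⟨h1, Or.inr h2⟩
  · rw [Set.eq_empty_iff_forall_notMem]
    rintro x ⟨h1, h2⟩
    exact hDS x ⟨h2, Or.inl h1⟩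
  · intro B hB hBfin
    exact ⟨σι ⟨B, hB, hBfin⟩, hσι1 ⟨B, hB, hBfin⟩, hcl.1 _ (Set.mem_range_self _)⟩

private lemma coh_to_fincoh (cl : Set T → Set T) (Tneg : Set T) {K : Set (Set T)}
    (h : CohSDS cl Tneg K) : FinCohSDS cl Tneg K := by
  obtain ⟨k1, k2, k3, k4, k5⟩ := h
  exact ⟨k1, k2, k3, k4, fun W hW _ hne f hf => k5 W hW hne f hf⟩

private lemma fincoh_to_coh (cl : Set T → Set T) (Tneg : Set T)
    (hcl : IsClosure cl) (hsan : cl (∅ : Set T) ∩ Tneg = ∅) (hfin : IsFinitary cl)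
    (K : Set (Set T)) (hKf : FinitarySDS K) (hK : FinCohSDS cl Tneg K) :
    CohSDS cl Tneg K := by
  classical
  obtain ⟨t₀⟩ := ‹Nonempty T›
  obtain ⟨k1, k2, k3, k4, k5⟩ := hK
  refine ⟨k1, k2, k3, k4, ?_⟩
  intro W hWK hWne f hf
  by_contra hA₀
  obtain ⟨D, hD, hDA, hDmeet⟩ :=
    sep_lemma cl Tneg hcl hsan hfin K ⟨k1, k2, k3, k4, k5⟩ _ hA₀
  have hmeet : ∀ A ∈ W, (A ∩ D).Nonempty := by
    intro A hA
    obtain ⟨B, hBfin, hBsub, hBK⟩ := hKf A (hWK hA)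
    obtain ⟨x, hx1, hx2⟩ := hDmeet B hBK hBfin
    exact ⟨x, hBsub hx1, hx2⟩
  let σ : Set T → T := fun A => if h : (A ∩ D).Nonempty then h.choose else t₀
  have hσ : ∀ A ∈ W, σ A ∈ A ∩ D := by
    intro A hA
    have h := hmeet A hA
    simp only [σ, dif_pos h]
    exact h.choose_spec
  have hσS : σ '' W ⊆ D := by
    rintro _ ⟨A, hA, rfl⟩
    exact (hσ A hA).2
  have hfD : f ⟨σ, fun A hA => (hσ A hA).1⟩ ∈ D := by
    have h1 := hf ⟨σ, fun A hA => (hσ A hA).1⟩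
    have h2 : cl (σ '' W) ⊆ D := hD.1 ▸ hcl.2.1 _ _ hσS
    exact h2 h1
  rw [Set.eq_empty_iff_forall_notMem] at hDA
  exact hDA _ ⟨Set.mem_range_self _, hfD⟩

private lemma finPart_finitary (K : Set (Set T)) : FinitarySDS (finPart K) := by
  rintro A ⟨B, hBK, hBfin, hBsub⟩
  exact ⟨B, hBfin, hBsub, ⟨B, hBK, hBfin, subset_rfl⟩⟩

private lemma finPart_fincoh (cl : Set T → Set T) (Tneg : Set T)
    (hcl : IsClosure cl) (K : Set (Set T)) (hK : FinCohSDS cl Tneg K) :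
    FinCohSDS cl Tneg (finPart K) := by
  classical
  obtain ⟨t₀⟩ := ‹Nonempty T›
  obtain ⟨k1, k2, k3, k4, k5⟩ := hK
  refine ⟨?_, ?_, ?_, ?_, ?_⟩
  · rintro ⟨B, hBK, _, hBsub⟩
    rw [Set.subset_empty_iff] at hBsub
    exact k1 (hBsub ▸ hBK)
  · rintro A₁ ⟨B, hBK, hBfin, hBsub⟩ A₂ h12
    exact ⟨B, hBK, hBfin, hBsub.trans h12⟩
  · rintro A ⟨B, hBK, hBfin, hBsub⟩
    exact ⟨B \ Tneg, k3 B hBK, hBfin.diff, Set.diff_subset_diff_left hBsub⟩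
  · intro t ht
    exact ⟨{t}, k4 t ht, Set.finite_singleton t, subset_rfl⟩
  · intro W hW hWfin hWne f hf
    have hB : ∀ A ∈ W, ∃ Bb : Set T, Bb ∈ K ∧ Bb.Finite ∧ Bb ⊆ A := by
      intro A hA
      obtain ⟨Bb, hBK, hBfin, hBsub⟩ := hW hA
      exact ⟨Bb, hBK, hBfin, hBsub⟩
    choose! Bf hBK hBfin hBsub using hB
    set V : Set (Set T) := Bf '' W with hV
    have hVK : V ⊆ K := by
      rintro _ ⟨A, hA, rfl⟩
      exact hBK A hA
    have hVfin : V.Finite := hWfin.image _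
    have hVne : V.Nonempty := hWne.image _
    have hVmem : ∀ v ∈ V, Set.Finite v := by
      rintro _ ⟨A, hA, rfl⟩
      exact hBfin A hA
    let σof : (Set T → T) → Set T → T := fun h A => if A ∈ W then h (Bf A) else t₀
    have hσof : ∀ h : Set T → T, (∀ v ∈ V, h v ∈ v) → ∀ A ∈ W, σof h A ∈ A := by
      intro h hh A hA
      simp only [σof, if_pos hA]
      exact (hBsub A hA) (hh (Bf A) ⟨A, hA, rfl⟩)
    let F : (Set T → T) → T := fun h =>
      if pf : ∀ A ∈ W, σof h A ∈ A then f ⟨σof h, pf⟩ else t₀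
    let n : Sel V → (Set T → T) := fun τ A => if A ∈ V then τ.1 A else t₀
    have hn : ∀ τ : Sel V, ∀ v ∈ V, n τ v ∈ v := by
      intro τ v hv
      simp only [n, if_pos hv]
      exact τ.2 v hv
    let g : Sel V → T := fun τ => F (n τ)
    have hgf : ∀ τ : Sel V, g τ = f ⟨σof (n τ), hσof (n τ) (hn τ)⟩ := by
      intro τ
      exact dif_pos (hσof (n τ) (hn τ))
    have hg : ∀ τ : Sel V, g τ ∈ cl (τ.1 '' V) := by
      intro τ
      rw [hgf τ]
      have hsub : σof (n τ) '' W ⊆ τ.1 '' V := by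
        rintro _ ⟨A, hA, rfl⟩
        have hBV : Bf A ∈ V := ⟨A, hA, rfl⟩
        have h1 : σof (n τ) A = τ.1 (Bf A) := by
          simp only [σof, if_pos hA, n, if_pos hBV]
        rw [h1]
        exact ⟨Bf A, hBV, rfl⟩
      exact hcl.2.1 _ _ hsub (hf ⟨σof (n τ), hσof (n τ) (hn τ)⟩)
    have hrg : Set.range g ∈ K := k5 V hVK hVfin hVne g hg
    -- range g is finite
    haveI : Finite (↥V) := hVfin
    let G2 : ((v : ↥V) → T) → T := fun k =>
      F (fun A => if h : A ∈ V then k ⟨A, h⟩ else t₀)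
    have hP : (Set.pi (Set.univ : Set ↥V) (fun v => (v.1 : Set T))).Finite :=
      Set.Finite.pi (fun v => hVmem v.1 v.2)
    have hrsub : Set.range g ⊆ G2 '' (Set.pi Set.univ (fun v : ↥V => (v.1 : Set T))) := by
      rintro _ ⟨τ, rfl⟩
      refine ⟨fun v => τ.1 v.1, fun v _ => τ.2 v.1 v.2, ?_⟩
      have : (fun A => if h : A ∈ V then τ.1 A else t₀) = n τ := by
        funext A
        by_cases h : A ∈ V
        · simp only [n, dif_pos h, if_pos h]
        · simp only [n, dif_neg h, if_neg h]
      simp only [G2, this, g]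
    have hrfin : (Set.range g).Finite := (hP.image G2).subset hrsub
    have hrsubf : Set.range g ⊆ Set.range f := by
      rintro _ ⟨τ, rfl⟩
      rw [hgf τ]
      exact Set.mem_range_self _
    exact ⟨Set.range g, hrg, hrfin, hrsubf⟩

end AuxCoherence

/-- When the closure operator is finitary: a finitary SDS is finitely coherent
iff it is coherent, and the finitary part of any (finitely) coherent SDS is
coherent. -/
theorem finitarySDS_coherence (T : Type u) [Nonempty T]
    (cl : Set T → Set T) (Tneg : Set T)
    (hcl : IsClosure cl) (hsan : cl (∅ : Set T) ∩ Tneg = ∅)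
    (hfin : IsFinitary cl) :
    (∀ K : Set (Set T), FinitarySDS K →
      (FinCohSDS cl Tneg K ↔ CohSDS cl Tneg K)) ∧
    (∀ K : Set (Set T), CohSDS cl Tneg K ∨ FinCohSDS cl Tneg K →
      CohSDS cl Tneg (finPart K)) := by
  constructor
  · intro K hKfin
    constructor
    · intro h
      exact fincoh_to_coh cl Tneg hcl hsan hfin K hKfin h
    · intro h
      exact coh_to_fincoh cl Tneg h
  · intro K h
    have hfc : FinCohSDS cl Tneg K := by
      rcases h with h | h
      · exact coh_to_fincoh cl Tneg h
      · exact h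
    exact fincoh_to_coh cl Tneg hcl hsan hfin _ (finPart_finitary K)
      (finPart_fincoh cl Tneg hcl K hfc)
end

section
/- Assume cl is finitary. Then a finitely consistent SDFS K̂ ⊆ Fin(T) is finitely coherent if and only if K̂ = ⋂{sdfs(D) : D a coherent SDT with K̂ ⊆ sdfs(D)}, where sdfs(D) := {F ∈ Fin(T) : F ∩ D ≠ ∅}. -/
universe u

variable {T : Type u}

set_option linter.unusedSectionVars false

section AuxProof

variable [Nonempty T] {cl : Set T → Set T} {Tneg : Set T}

lemma clS_finite (hcl : IsClosure cl) {M : Set (Set T)} (hM : FinCohSDFS cl Tneg M)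
    {H₀ : Set T} (hH₀ : H₀ ∈ M) {S : Set T} (hSfin : S.Finite) (hSne : S.Nonempty) :
    (cl S).Finite := by
  classical
  cases finite_or_infinite T with
  | inl hT => exact Set.Finite.subset Set.finite_univ (Set.subset_univ _)
  | inr hT =>
    have hH₀fin : H₀.Finite := hM.1 H₀ hH₀
    set base : Set T := H₀ ∪ S with hbase
    have hbasefin : base.Finite := hH₀fin.union hSfin
    have hdiff : (Set.univ \ base).Infinite := Set.infinite_univ.diff hbasefin
    haveI : Infinite ↥(Set.univ \ base) := Set.infinite_coe_iff.2 hdiff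
    haveI := hSfin.fintype
    -- injective tagging of S into the complement of base
    set ι : ↥S ↪ ↥(Set.univ \ base) :=
      ((Fintype.equivFin ↥S).toEmbedding.trans Fin.valEmbedding).trans
        (Infinite.natEmbedding ↥(Set.univ \ base)) with hι
    set tag : T → T := fun s => if hs : s ∈ S then (ι ⟨s, hs⟩ : T) else Classical.arbitrary T
      with htag
    have htag_mem : ∀ s ∈ S, tag s ∉ base := by
      intro s hs
      simp only [htag, dif_pos hs]
      exact (ι ⟨s, hs⟩).2.2
    have htag_inj : ∀ s ∈ S, ∀ s' ∈ S, tag s = tag s' → s = s' := by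
      intro s hs s' hs' h
      simp only [htag, dif_pos hs, dif_pos hs'] at h
      have := ι.injective (Subtype.ext h)
      exact congrArg Subtype.val this
    set A : T → Set T := fun s => insert (tag s) base with hA
    have hA_inj : ∀ s ∈ S, ∀ s' ∈ S, A s = A s' → s = s' := by
      intro s hs s' hs' h
      apply htag_inj s hs s' hs'
      have h1 : tag s ∈ A s' := h ▸ Set.mem_insert _ _
      rcases h1 with h1 | h1
      · exact h1
      · exact absurd h1 (htag_mem s hs)
    set V : Set (Set T) := A '' S with hV
    have hVM : V ⊆ M := by
      rintro _ ⟨s, hs, rfl⟩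
      exact hM.2.2.1 H₀ hH₀ _ ((hbasefin.insert _)) (Set.subset_union_left.trans (Set.subset_insert _ _))
    have hVfin : V.Finite := (hSfin.image A)
    have hVne : V.Nonempty := hSne.image A
    have hemptyV : (∅ : Set T) ∉ V := by
      rintro ⟨s, hs, h⟩
      exact (Set.insert_nonempty _ _).ne_empty h
    -- the canonical selection
    set τ : Set T → T := fun B => if h : ∃ s, s ∈ S ∧ B = A s then h.choose else Classical.arbitrary T
      with hτ
    have hτsel : ∀ s ∈ S, τ (A s) = s := by
      intro s hs
      have hex : ∃ s', s' ∈ S ∧ A s = A s' := ⟨s, hs, rfl⟩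
      simp only [hτ, dif_pos hex]
      exact (hA_inj _ hex.choose_spec.1 s hs hex.choose_spec.2.symm)
    have hτmem : ∀ B ∈ V, τ B ∈ B := by
      rintro _ ⟨s, hs, rfl⟩
      rw [hτsel s hs]
      exact Set.mem_insert_of_mem _ (Set.mem_union_right _ hs)
    have hτimg : τ '' V = S := by
      apply Set.Subset.antisymm
      · rintro _ ⟨_, ⟨s, hs, rfl⟩, rfl⟩
        rw [hτsel s hs]; exact hs
      · intro s hs
        exact ⟨A s, ⟨s, hs, rfl⟩, hτsel s hs⟩
    obtain ⟨s₀, hs₀⟩ := hSne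
    -- the big selection function
    set f : Sel V → T := fun σ =>
      if (∀ B ∈ V, σ.1 B = τ B) ∧ σ.1 ∅ ∈ cl S then σ.1 ∅ else σ.1 (A s₀) with hf
    have hfcl : ∀ σ : Sel V, f σ ∈ cl (σ.1 '' V) := by
      intro σ
      simp only [hf]
      split_ifs with h
      · have himg : σ.1 '' V = S := by
          rw [Set.image_congr h.1, hτimg]
        rw [himg]; exact h.2
      · exact hcl.1 _ (Set.mem_image_of_mem _ ⟨s₀, hs₀, rfl⟩)
    have hrange : Set.range f ∈ M := hM.2.2.2.2.2 V hVM hVfin hVne f hfcl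
    have hrfin : (Set.range f).Finite := hM.1 _ hrange
    apply hrfin.subset
    intro t ht
    have hne : (∅ : Set T) ∉ V := hemptyV
    set σt : Sel V := ⟨fun B => if B ∈ V then τ B else t, by
      intro B hB; simp only [if_pos hB]; exact hτmem B hB⟩ with hσt
    refine ⟨σt, ?_⟩
    have h1 : ∀ B ∈ V, σt.1 B = τ B := by
      intro B hB
      show (if B ∈ V then τ B else t) = τ B
      exact if_pos hB
    have h2 : σt.1 ∅ = t := by
      show (if (∅ : Set T) ∈ V then τ ∅ else t) = t
      exact if_neg hne
    have h3 : σt.1 ∅ ∈ cl S := by rw [h2]; exact ht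
    show (if (∀ B ∈ V, σt.1 B = τ B) ∧ σt.1 ∅ ∈ cl S then σt.1 ∅ else σt.1 (A s₀)) = t
    rw [if_pos ⟨h1, h3⟩, h2]

lemma sdt_coh (hcl : IsClosure cl) (hfin : IsFinitary cl) {M : Set (Set T)}
    (hM : FinCohSDFS cl Tneg M) : CohSDT cl Tneg (sdt M) := by
  classical
  constructor
  · apply Set.Subset.antisymm
    · intro t ht
      rw [hfin (sdt M)] at ht
      rw [Set.mem_iUnion₂] at ht
      obtain ⟨S, ⟨hSfin, hSD⟩, htS⟩ := ht
      rcases S.eq_empty_or_nonempty with rfl | hSne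
      · exact hM.2.2.2.2.1 t htS
      · set W : Set (Set T) := (fun x => ({x} : Set T)) '' S with hW
        have hWM : W ⊆ M := by rintro _ ⟨x, hx, rfl⟩; exact hSD hx
        have himg : ∀ σ : Sel W, σ.1 '' W = S := by
          intro σ
          apply Set.Subset.antisymm
          · rintro _ ⟨_, ⟨x, hx, rfl⟩, rfl⟩
            have h : σ.1 {x} ∈ ({x} : Set T) := σ.2 _ ⟨x, hx, rfl⟩
            show σ.1 {x} ∈ S
            rw [Set.mem_singleton_iff.1 h]; exact hx
          · intro x hx
            have : σ.1 {x} ∈ ({x} : Set T) := σ.2 _ ⟨x, hx, rfl⟩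
            exact ⟨{x}, ⟨x, hx, rfl⟩, Set.mem_singleton_iff.1 this⟩
        have hfcl : ∀ σ : Sel W, (fun _ => t) σ ∈ cl (σ.1 '' W) := by
          intro σ; rw [himg σ]; exact htS
        have hrange := hM.2.2.2.2.2 W hWM (hSfin.image _) (hSne.image _) _ hfcl
        haveI : Nonempty (Sel W) := by
          refine ⟨⟨fun A => if h : A.Nonempty then h.some else Classical.arbitrary T, ?_⟩⟩
          rintro _ ⟨x, hx, rfl⟩
          simp only [dif_pos (Set.singleton_nonempty x)]
          exact (Set.singleton_nonempty x).some_mem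
        rwa [Set.range_const] at hrange
    · exact hcl.1 _
  · rw [Set.eq_empty_iff_forall_notMem]
    rintro t ⟨htD, htn⟩
    have h1 : ({t} : Set T) \ Tneg ∈ M := hM.2.2.2.1 _ htD
    have h2 : ({t} : Set T) \ Tneg = ∅ := by
      rw [Set.eq_empty_iff_forall_notMem]
      rintro x ⟨hx, hxn⟩
      rw [Set.mem_singleton_iff.1 hx] at hxn
      exact hxn htn
    rw [h2] at h1
    exact hM.2.1 h1


/-- The natural one-step extension of `M` by the singleton `{s}`. -/
def ExtM (cl : Set T → Set T) (Tneg : Set T) (M : Set (Set T)) (s : T) : Set (Set T) :=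
  {H | H.Finite ∧ ∃ W : Set (Set T), W ⊆ M ∧ W.Finite ∧ ∃ g : Sel W → T,
    (∀ σ : Sel W, g σ ∈ cl (insert s (σ.1 '' W))) ∧ Set.range g \ Tneg ⊆ H}


lemma ExtM_upward {M : Set (Set T)} {s : T} {H H' : Set T} (hH : H ∈ ExtM cl Tneg M s)
    (hH' : H'.Finite) (hsub : H ⊆ H') : H' ∈ ExtM cl Tneg M s := by
  obtain ⟨h1, W, h2, h3, g, h4, h5⟩ := hH
  exact ⟨hH', W, h2, h3, g, h4, h5.trans hsub⟩

lemma subset_ExtM (hcl : IsClosure cl) {M : Set (Set T)} (hM : FinCohSDFS cl Tneg M)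
    (s : T) : M ⊆ ExtM cl Tneg M s := by
  intro H hH
  refine ⟨hM.1 H hH, {H \ Tneg}, ?_, Set.finite_singleton _,
    fun σ => σ.1 (H \ Tneg), ?_, ?_⟩
  · simp only [Set.singleton_subset_iff]
    exact hM.2.2.2.1 H hH
  · intro σ
    apply hcl.1
    exact Set.mem_insert_of_mem _ (Set.mem_image_of_mem _ rfl)
  · rintro x ⟨⟨σ, rfl⟩, hxn⟩
    exact (σ.2 (H \ Tneg) rfl).1

lemma singleton_mem_ExtM (hcl : IsClosure cl) {M : Set (Set T)} (s : T) :
    ({s} : Set T) ∈ ExtM cl Tneg M s := by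
  refine ⟨Set.finite_singleton s, ∅, Set.empty_subset _, Set.finite_empty,
    fun _ => s, ?_, ?_⟩
  · intro σ
    exact hcl.1 _ (Set.mem_insert _ _)
  · rintro x ⟨⟨σ, rfl⟩, hxn⟩
    rfl

lemma mem_ExtM_of_empty {M : Set (Set T)} {s : T} (h : (∅ : Set T) ∈ ExtM cl Tneg M s)
    {H : Set T} (hH : H.Finite) : H ∈ ExtM cl Tneg M s :=
  ExtM_upward h hH (Set.empty_subset _)

lemma ExtM_coh (hcl : IsClosure cl) {M : Set (Set T)} (hM : FinCohSDFS cl Tneg M)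
    {G₀ : Set T} (hG₀ : G₀ ∈ M) (s : T) (hne : (∅ : Set T) ∉ ExtM cl Tneg M s) :
    FinCohSDFS cl Tneg (ExtM cl Tneg M s) := by
  classical
  refine ⟨fun H hH => hH.1, hne, fun H hH H' h1 h2 => ExtM_upward hH h1 h2, ?_, ?_, ?_⟩
  · -- F3
    rintro H ⟨h1, W, h2, h3, g, h4, h5⟩
    refine ⟨h1.diff, W, h2, h3, g, h4, ?_⟩
    rintro x ⟨hx1, hx2⟩
    exact ⟨h5 ⟨hx1, hx2⟩, hx2⟩
  · -- F4
    intro t ht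
    refine ⟨Set.finite_singleton t, ∅, Set.empty_subset _, Set.finite_empty,
      fun _ => t, ?_, ?_⟩
    · intro σ
      exact hcl.2.1 _ _ (Set.empty_subset _) ht
    · rintro x ⟨⟨σ, rfl⟩, hxn⟩
      rfl
  · -- F5
    intro V hVE hVfin hVne f0 hf0
    -- members of V are nonempty
    have hVne' : ∀ H ∈ V, H.Nonempty := by
      intro H hH
      rcases H.eq_empty_or_nonempty with rfl | h
      · exact absurd (hVE hH) hne
      · exact h
    -- choose witnesses
    have hch : ∀ H : Set T, ∃ (W : Set (Set T)) (g : Sel W → T),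
        H ∈ V → (W ⊆ M ∧ W.Finite ∧ (∀ σ : Sel W, g σ ∈ cl (insert s (σ.1 '' W))) ∧
          Set.range g \ Tneg ⊆ H) := by
      intro H
      by_cases hH : H ∈ V
      · obtain ⟨h1, W, h2, h3, g, h4, h5⟩ := hVE hH
        exact ⟨W, g, fun _ => ⟨h2, h3, h4, h5⟩⟩
      · exact ⟨∅, fun _ => Classical.arbitrary T, fun h => absurd h hH⟩
    choose Wc gc hc using hch
    set 𝒲 : Set (Set T) := ⋃ H ∈ V, Wc H with h𝒲
    have h𝒲M : 𝒲 ⊆ M := by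
      intro A hA
      rw [Set.mem_iUnion₂] at hA
      obtain ⟨H, hH, hA⟩ := hA
      exact (hc H hH).1 hA
    have h𝒲fin : 𝒲.Finite := hVfin.biUnion fun H hH => (hc H hH).2.1
    -- restriction of selections
    have hres : ∀ (σ : Sel 𝒲) (H : Set T), H ∈ V → ∀ A ∈ Wc H, σ.1 A ∈ A := by
      intro σ H hH A hA
      exact σ.2 A (Set.mem_iUnion₂.2 ⟨H, hH, hA⟩)
    set r : Sel 𝒲 → Set T → T := fun σ H =>
      if hH : H ∈ V then gc H ⟨σ.1, hres σ H hH⟩ else Classical.arbitrary T with hr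
    have hr1 : ∀ (σ : Sel 𝒲) (H : Set T) (hH : H ∈ V),
        r σ H ∈ cl (insert s (σ.1 '' 𝒲)) := by
      intro σ H hH
      simp only [hr, dif_pos hH]
      have h1 := (hc H hH).2.2.1 ⟨σ.1, hres σ H hH⟩
      refine hcl.2.1 _ _ ?_ h1
      exact Set.insert_subset_insert (Set.image_mono (fun A hA => Set.mem_iUnion₂.2 ⟨H, hH, hA⟩))
    have hr2 : ∀ (σ : Sel 𝒲) (H : Set T) (hH : H ∈ V), r σ H ∉ Tneg → r σ H ∈ H := by
      intro σ H hH hn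
      apply (hc H hH).2.2.2
      refine ⟨?_, hn⟩
      simp only [hr, dif_pos hH]
      exact Set.mem_range_self _
    -- the composite selection into V
    set τf : Sel 𝒲 → Sel V := fun σ =>
      ⟨fun H => if h : H ∈ V ∧ r σ H ∉ Tneg then r σ H
        else if h2 : H.Nonempty then h2.some else Classical.arbitrary T, by
        intro H hH
        by_cases h : H ∈ V ∧ r σ H ∉ Tneg
        · simp only [dif_pos h]; exact hr2 σ H hH h.2
        · simp only [dif_neg h, dif_pos (hVne' H hH)]
          exact (hVne' H hH).some_mem⟩ with hτf
    set g' : Sel 𝒲 → T := fun σ =>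
      if hex : ∃ H ∈ V, r σ H ∈ Tneg then r σ hex.choose else f0 (τf σ) with hg'
    have hg'cl : ∀ σ : Sel 𝒲, g' σ ∈ cl (insert s (σ.1 '' 𝒲)) := by
      intro σ
      simp only [hg']
      split_ifs with hex
      · exact hr1 σ _ hex.choose_spec.1
      · push_neg at hex
        have h1 : (τf σ).1 '' V ⊆ cl (insert s (σ.1 '' 𝒲)) := by
          rintro _ ⟨H, hH, rfl⟩
          have hc1 : H ∈ V ∧ r σ H ∉ Tneg := ⟨hH, hex H hH⟩
          show (if h : H ∈ V ∧ r σ H ∉ Tneg then r σ H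
            else if h2 : H.Nonempty then h2.some else Classical.arbitrary T) ∈ _
          rw [dif_pos hc1]
          exact hr1 σ H hH
        have h2 := hf0 (τf σ)
        have h3 := hcl.2.1 _ _ h1 h2
        rwa [hcl.2.2] at h3
    have hg'r : Set.range g' \ Tneg ⊆ Set.range f0 := by
      rintro x ⟨⟨σ, rfl⟩, hxn⟩
      by_cases hex : ∃ H ∈ V, r σ H ∈ Tneg
      · exfalso
        apply hxn
        show g' σ ∈ Tneg
        simp only [hg', dif_pos hex]
        exact hex.choose_spec.2
      · have : g' σ = f0 (τf σ) := by simp only [hg', dif_neg hex]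
        rw [this]
        exact Set.mem_range_self _
    -- finiteness of the range of f0
    have hU : (⋃₀ V).Finite := hVfin.sUnion fun H hH => (hVE hH).1
    have hranfin : (Set.range f0).Finite := by
      have hbound : Set.range f0 ⊆ ⋃ S ∈ {S : Set T | S ⊆ ⋃₀ V ∧ S.Nonempty}, cl S := by
        rintro _ ⟨τ, rfl⟩
        rw [Set.mem_iUnion₂]
        refine ⟨τ.1 '' V, ⟨?_, hVne.image _⟩, hf0 τ⟩
        rintro _ ⟨H, hH, rfl⟩
        exact Set.mem_sUnion.2 ⟨H, hH, τ.2 H hH⟩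
      refine Set.Finite.subset (Set.Finite.biUnion ?_ ?_) hbound
      · exact hU.finite_subsets.subset fun S hS => hS.1
      · intro S hS
        exact clS_finite hcl hM hG₀ (hU.subset hS.1) hS.2
    exact ⟨hranfin, 𝒲, h𝒲M, h𝒲fin, g', hg'cl, hg'r⟩


lemma sUnion_chain_coh {c : Set (Set (Set T))} (hc : ∀ N ∈ c, FinCohSDFS cl Tneg N)
    (hchain : IsChain (· ⊆ ·) c) (hcne : c.Nonempty) : FinCohSDFS cl Tneg (⋃₀ c) := by
  classical
  refine ⟨?_, ?_, ?_, ?_, ?_, ?_⟩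
  · rintro F ⟨N, hN, hF⟩
    exact (hc N hN).1 F hF
  · rintro ⟨N, hN, hF⟩
    exact (hc N hN).2.1 hF
  · rintro F ⟨N, hN, hF⟩ F' h1 h2
    exact ⟨N, hN, (hc N hN).2.2.1 F hF F' h1 h2⟩
  · rintro F ⟨N, hN, hF⟩
    exact ⟨N, hN, (hc N hN).2.2.2.1 F hF⟩
  · intro t ht
    obtain ⟨N, hN⟩ := hcne
    exact ⟨N, hN, (hc N hN).2.2.2.2.1 t ht⟩
  · intro W hW hWfin hWne f hf
    have hch : ∀ A : Set T, ∃ N, A ∈ W → N ∈ c ∧ A ∈ N := by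
      intro A
      by_cases hA : A ∈ W
      · obtain ⟨N, hN, hAN⟩ := hW hA
        exact ⟨N, fun _ => ⟨hN, hAN⟩⟩
      · exact ⟨∅, fun h => absurd h hA⟩
    choose Nc hNc using hch
    have hSfin : (Nc '' W).Finite := hWfin.image _
    have hSne : (Nc '' W).Nonempty := hWne.image _
    obtain ⟨N₀, hN₀S, hN₀max⟩ := hSfin.exists_maximalFor id _ hSne
    have hN₀c : N₀ ∈ c := by
      obtain ⟨A, hA, rfl⟩ := hN₀S
      exact (hNc A hA).1
    have htop : ∀ A ∈ W, A ∈ N₀ := by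
      intro A hA
      have hNcA : Nc A ∈ c := (hNc A hA).1
      have : Nc A ⊆ N₀ := by
        rcases hchain.total hNcA hN₀c with h | h
        · exact h
        · exact hN₀max ⟨A, hA, rfl⟩ h
      exact this (hNc A hA).2
    have := (hc N₀ hN₀c).2.2.2.2.2 W htop hWfin hWne f hf
    exact ⟨N₀, hN₀c, this⟩

lemma key_lemma (hcl : IsClosure cl) (hfin : IsFinitary cl) {K : Set (Set T)}
    (hK : FinCohSDFS cl Tneg K) {F : Set T} (hFfin : F.Finite) (hF : F ∉ K) :
    ∃ D : Set T, CohSDT cl Tneg D ∧ K ⊆ sdfs D ∧ F ∩ D = ∅ := by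
  classical
  set P : Set (Set (Set T)) := {N | FinCohSDFS cl Tneg N ∧ K ⊆ N ∧ F ∉ N} with hP
  have hzorn : ∀ c ⊆ P, IsChain (· ⊆ ·) c → c.Nonempty → ∃ ub ∈ P, ∀ N ∈ c, N ⊆ ub := by
    intro c hcP hchain hcne
    refine ⟨⋃₀ c, ⟨sUnion_chain_coh (fun N hN => (hcP hN).1) hchain hcne, ?_, ?_⟩,
      fun N hN => Set.subset_sUnion_of_mem hN⟩
    · obtain ⟨N, hN⟩ := hcne
      exact (hcP hN).2.1.trans (Set.subset_sUnion_of_mem hN)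
    · rintro ⟨N, hN, hFN⟩
      exact (hcP hN).2.2 hFN
  obtain ⟨M, hKM, hMmax⟩ := zorn_subset_nonempty P hzorn K ⟨hK, subset_rfl, hF⟩
  obtain ⟨hMcoh, hKsubM, hFM⟩ := hMmax.1
  refine ⟨sdt M, sdt_coh hcl hfin hMcoh, ?_, ?_⟩
  · -- K ⊆ sdfs (sdt M), via conjunctivity of M
    intro G hG
    have hGM : G ∈ M := hKsubM hG
    have hGfin : G.Finite := hMcoh.1 G hGM
    refine ⟨hGfin, ?_⟩
    by_contra hcon
    rw [Set.not_nonempty_iff_eq_empty, Set.eq_empty_iff_forall_notMem] at hcon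
    have hsing : ∀ t ∈ G, ({t} : Set T) ∉ M := by
      intro t ht hmem
      exact hcon t ⟨ht, hmem⟩
    -- for every s ∈ G, F belongs to the extension of M by s
    have hFE : ∀ s ∈ G, F ∈ ExtM cl Tneg M s := by
      intro s hs
      by_contra hFEs
      have hne : (∅ : Set T) ∉ ExtM cl Tneg M s := by
        intro h
        exact hFEs (mem_ExtM_of_empty h hFfin)
      have hEcoh : FinCohSDFS cl Tneg (ExtM cl Tneg M s) := ExtM_coh hcl hMcoh hGM s hne
      have hMsubE : M ⊆ ExtM cl Tneg M s := subset_ExtM hcl hMcoh s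
      have hEP : ExtM cl Tneg M s ∈ P := ⟨hEcoh, hKsubM.trans hMsubE, hFEs⟩
      have := hMmax.2 hEP hMsubE
      exact hsing s hs (this (singleton_mem_ExtM hcl s))
    -- extract the witnesses
    have hch : ∀ s : T, ∃ (W : Set (Set T)) (g : Sel W → T),
        s ∈ G → (W ⊆ M ∧ W.Finite ∧ (∀ σ : Sel W, g σ ∈ cl (insert s (σ.1 '' W))) ∧
          Set.range g \ Tneg ⊆ F) := by
      intro s
      by_cases hs : s ∈ G
      · obtain ⟨h1, W, h2, h3, g, h4, h5⟩ := hFE s hs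
        exact ⟨W, g, fun _ => ⟨h2, h3, h4, h5⟩⟩
      · exact ⟨∅, fun _ => Classical.arbitrary T, fun h => absurd h hs⟩
    choose Ws gs hws using hch
    set 𝒲 : Set (Set T) := insert G (⋃ s ∈ G, Ws s) with h𝒲
    have hGin : G ∈ 𝒲 := Set.mem_insert _ _
    have h𝒲M : 𝒲 ⊆ M := by
      rintro A (rfl | hA)
      · exact hGM
      · rw [Set.mem_iUnion₂] at hA
        obtain ⟨s, hs, hA⟩ := hA
        exact (hws s hs).1 hA
    have h𝒲fin : 𝒲.Finite := (hGfin.biUnion fun s hs => (hws s hs).2.1).insert G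
    have h𝒲ne : 𝒲.Nonempty := ⟨G, hGin⟩
    have hσG : ∀ σ : Sel 𝒲, σ.1 G ∈ G := fun σ => σ.2 G hGin
    set f : Sel 𝒲 → T := fun σ =>
      gs (σ.1 G) ⟨σ.1, fun A hA => σ.2 A (Set.mem_insert_of_mem _
        (Set.mem_iUnion₂.2 ⟨σ.1 G, hσG σ, hA⟩))⟩ with hfdef
    have hfcl : ∀ σ : Sel 𝒲, f σ ∈ cl (σ.1 '' 𝒲) := by
      intro σ
      have h1 := (hws (σ.1 G) (hσG σ)).2.2.1
        ⟨σ.1, fun A hA => σ.2 A (Set.mem_insert_of_mem _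
          (Set.mem_iUnion₂.2 ⟨σ.1 G, hσG σ, hA⟩))⟩
      refine hcl.2.1 _ _ ?_ h1
      rw [Set.insert_subset_iff]
      constructor
      · exact Set.mem_image_of_mem _ hGin
      · exact Set.image_mono fun A hA => Set.mem_insert_of_mem _
          (Set.mem_iUnion₂.2 ⟨σ.1 G, hσG σ, hA⟩)
    have hrange : Set.range f ∈ M := hMcoh.2.2.2.2.2 𝒲 h𝒲M h𝒲fin h𝒲ne f hfcl
    have hdiff : Set.range f \ Tneg ∈ M := hMcoh.2.2.2.1 _ hrange
    have hsubF : Set.range f \ Tneg ⊆ F := by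
      rintro x ⟨⟨σ, rfl⟩, hxn⟩
      exact (hws (σ.1 G) (hσG σ)).2.2.2 ⟨Set.mem_range_self _, hxn⟩
    exact hFM (hMcoh.2.2.1 _ hdiff F hFfin hsubF)
  · -- F ∩ sdt M = ∅
    rw [Set.eq_empty_iff_forall_notMem]
    rintro t ⟨htF, htD⟩
    exact hFM (hMcoh.2.2.1 _ htD F hFfin (Set.singleton_subset_iff.2 htF))


end AuxProof

/-- Conjunctive representation for finitely coherent SDFSes: when the closure
operator is finitary, a finitely consistent SDFS is finitely coherent iff it
is an intersection of conjunctive models. -/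
theorem conjunctive_representation_SDFS (T : Type u) [Nonempty T]
    (cl : Set T → Set T) (Tneg : Set T)
    (hcl : IsClosure cl) (hsan : cl (∅ : Set T) ∩ Tneg = ∅)
    (hfin : IsFinitary cl)
    (K : Set (Set T)) (hsub : ∀ F ∈ K, Set.Finite F)
    (hcons : ∃ K' : Set (Set T), FinCohSDFS cl Tneg K' ∧ K ⊆ K') :
    FinCohSDFS cl Tneg K ↔
      K = ⋂ D ∈ {D : Set T | CohSDT cl Tneg D ∧ K ⊆ sdfs D}, sdfs D := by
  classical
  obtain ⟨K', hK'coh, hKK'⟩ := hcons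
  constructor
  · intro hKcoh
    apply Set.Subset.antisymm
    · intro F hF
      rw [Set.mem_iInter₂]
      rintro D ⟨hD, hKD⟩
      exact hKD hF
    · intro F hF
      -- the family is nonempty
      obtain ⟨D₀, hD₀coh, hD₀sub, -⟩ :=
        key_lemma hcl hfin hKcoh Set.finite_empty hKcoh.2.1
      have hFfin : F.Finite := (Set.mem_iInter₂.1 hF D₀ ⟨hD₀coh, hD₀sub⟩).1
      by_contra hFK
      obtain ⟨D, hDcoh, hDsub, hdisj⟩ := key_lemma hcl hfin hKcoh hFfin hFK
      have := (Set.mem_iInter₂.1 hF D ⟨hDcoh, hDsub⟩).2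
      rw [hdisj] at this
      exact Set.not_nonempty_empty this
  · intro hEq
    have hempK : (∅ : Set T) ∉ K := fun h => hK'coh.2.1 (hKK' h)
    have hSne : {D : Set T | CohSDT cl Tneg D ∧ K ⊆ sdfs D}.Nonempty := by
      by_contra hS
      rw [Set.not_nonempty_iff_eq_empty] at hS
      apply hempK
      rw [hEq, Set.mem_iInter₂]
      intro D hD
      rw [hS] at hD
      exact absurd hD (Set.notMem_empty _)
    obtain ⟨D₀, hD₀⟩ := hSne
    have hmem : ∀ F ∈ K, ∀ D, CohSDT cl Tneg D → K ⊆ sdfs D → F ∈ sdfs D := by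
      intro F hF D h1 h2
      exact h2 hF
    refine ⟨?_, ?_, ?_, ?_, ?_, ?_⟩
    · intro F hF
      exact (hmem F hF D₀ hD₀.1 hD₀.2).1
    · exact hempK
    · intro F₁ hF₁ F₂ hF₂fin hsub12
      rw [hEq, Set.mem_iInter₂]
      rintro D hD
      obtain ⟨t, ht⟩ := (hmem F₁ hF₁ D hD.1 hD.2).2
      exact ⟨hF₂fin, t, hsub12 ht.1, ht.2⟩
    · intro F hF
      rw [hEq, Set.mem_iInter₂]
      rintro D hD
      obtain ⟨hFfin, t, ht1, ht2⟩ := hmem F hF D hD.1 hD.2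
      have htn : t ∉ Tneg := by
        intro h
        have : t ∈ D ∩ Tneg := ⟨ht2, h⟩
        rw [hD.1.2] at this
        exact this
      exact ⟨hFfin.diff, t, ⟨ht1, htn⟩, ht2⟩
    · intro t ht
      rw [hEq, Set.mem_iInter₂]
      rintro D hD
      refine ⟨Set.finite_singleton t, t, rfl, ?_⟩
      have : cl (∅ : Set T) ⊆ cl D := hcl.2.1 _ _ (Set.empty_subset _)
      rw [hD.1.1] at this
      exact this ht
    · intro W hW hWfin hWne f hf
      have hWK' : W ⊆ K' := fun A hA => hKK' (hW hA)
      have hranfin : (Set.range f).Finite :=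
        hK'coh.1 _ (hK'coh.2.2.2.2.2 W hWK' hWfin hWne f hf)
      rw [hEq, Set.mem_iInter₂]
      rintro D ⟨hDcoh, hDsub⟩
      refine ⟨hranfin, ?_⟩
      have hsel : ∀ A ∈ W, (A ∩ D).Nonempty := fun A hA => (hDsub (hW hA)).2
      set τ : Sel W := ⟨fun A => if h : (A ∩ D).Nonempty then h.some else Classical.arbitrary T, by
        intro A hA
        simp only [dif_pos (hsel A hA)]
        exact (hsel A hA).some_mem.1⟩ with hτ
      refine ⟨f τ, Set.mem_range_self _, ?_⟩
      have h1 : τ.1 '' W ⊆ D := by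
        rintro _ ⟨A, hA, rfl⟩
        show (if h : (A ∩ D).Nonempty then h.some else Classical.arbitrary T) ∈ D
        rw [dif_pos (hsel A hA)]
        exact (hsel A hA).some_mem.2
      have h2 := hcl.2.1 _ _ h1 (hf τ)
      rwa [hDcoh.1] at h2
end
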